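/- For every integer ℓ ≥ 1, every binary tree structure T with N internal nodes, and every integer m ≥ 1, the 2-partitioning function of the tree class T on ℝ^ℓ satisfies π²_T(m) ≤ (14 · m · ℓ)^N. -/
import Mathlib


/-- A `c`-partition of a finite set `S`: a set of `c` pairwise disjoint nonempty
subsets (parts) whose union is `S`. -/
def IsPartition {α : Type*} (S : Finset α) (c : ℕ) (P : Finset (Finset α)) : Prop :=
  P.card = c ∧ (∀ p ∈ P, p.Nonempty) ∧
    (∀ p ∈ P, ∀ q ∈ P, p ≠ q → Disjoint p q) ∧ (∀ x, x ∈ S ↔ ∃ p ∈ P, x ∈ p)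

/-- A binary tree structure: either a leaf, or an internal node with a left and a
right subtree structure. -/
inductive TreeStruct : Type where
  | leaf : TreeStruct
  | node : TreeStruct → TreeStruct → TreeStruct
deriving DecidableEq

namespace TreeStruct

/-- The number of leaves of a binary tree structure. -/
def leaves : TreeStruct → ℕ
  | leaf => 1
  | node l r => l.leaves + r.leaves

/-- The number of internal nodes of a binary tree structure. -/
def internals : TreeStruct → ℕ
  | leaf => 0
  | node l r => l.internals + r.internals + 1

end TreeStruct

/-- A decision tree on `ℝ^ℓ` with labels in `Y`: every leaf carries a label and every
internal node carries a decision rule `(i, θ, s)` with feature `i`, threshold `θ` and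
sign `s` (`true` codes `+1`, `false` codes `-1`). -/
inductive DTree (ℓ : ℕ) (Y : Type) : Type where
  | leaf : Y → DTree ℓ Y
  | node : Fin ℓ → ℝ → Bool → DTree ℓ Y → DTree ℓ Y → DTree ℓ Y

namespace DTree

/-- The output of a decision tree on an example `x`: at a node with rule `(i, θ, s)`,
`x` is sent to the left subtree if `sign (x^i - θ) = s` (i.e. `(θ < x^i) = s`) and to
the right subtree otherwise. -/
noncomputable def eval {ℓ : ℕ} {Y : Type} : DTree ℓ Y → (Fin ℓ → ℝ) → Y
  | leaf y, _ => y
  | node i θ s l r, x => if decide (θ < x i) = s then l.eval x else r.eval x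

/-- The underlying structure of a decision tree. -/
def shape {ℓ : ℕ} {Y : Type} : DTree ℓ Y → TreeStruct
  | leaf _ => .leaf
  | node _ _ _ l r => .node l.shape r.shape

end DTree

/-- A partition `P` of a sample `S ⊆ ℝ^ℓ` is realizable by the class of decision trees
with structure `T` if there is a decision tree `t` with structure `T` (labels in `ℕ`)
such that two points of `S` lie in the same part of `P` iff `t` outputs the same label
on them. -/
def TreeRealizable (ℓ : ℕ) (T : TreeStruct) (S : Finset (Fin ℓ → ℝ))
    (P : Finset (Finset (Fin ℓ → ℝ))) : Prop :=
  ∃ t : DTree ℓ ℕ, t.shape = T ∧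
    ∀ x ∈ S, ∀ y ∈ S, ((∃ p ∈ P, x ∈ p ∧ y ∈ p) ↔ t.eval x = t.eval y)

/-- `PartSet ℓ T a S` : the set of `a`-partitions of `S` realizable by the tree class `T`. -/
def PartSet (ℓ : ℕ) (T : TreeStruct) (a : ℕ) (S : Finset (Fin ℓ → ℝ)) :
    Set (Finset (Finset (Fin ℓ → ℝ))) :=
  {P | IsPartition S a P ∧ TreeRealizable ℓ T S P}

/-- The `a`-partitioning function of the tree class `T` on `ℝ^ℓ`: the largest number of
distinct `a`-partitions realizable by `T` on a sample of `m` points. -/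
noncomputable def treePi (ℓ : ℕ) (T : TreeStruct) (a m : ℕ) : ℕ :=
  sSup {n : ℕ | ∃ S : Finset (Fin ℓ → ℝ), S.card = m ∧ n = (PartSet ℓ T a S).ncard}

noncomputable section Aux
open scoped Classical

/-- The threshold filter: points of `S` sent left by rule `(i, θ, s)`. -/
def thrF {ℓ : ℕ} (S : Finset (Fin ℓ → ℝ)) (i : Fin ℓ) (s : Bool) (θ : ℝ) :
    Finset (Fin ℓ → ℝ) :=
  S.filter (fun x => decide (θ < x i) = s)

lemma thrF_card_inj {ℓ : ℕ} (S : Finset (Fin ℓ → ℝ)) (i : Fin ℓ) (s : Bool)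
    {θ₁ θ₂ : ℝ} (h : (thrF S i s θ₁).card = (thrF S i s θ₂).card) :
    thrF S i s θ₁ = thrF S i s θ₂ := by
  wlog hle : θ₁ ≤ θ₂ generalizing θ₁ θ₂
  · exact (this h.symm (le_of_not_ge hle)).symm
  cases s with
  | true =>
    have hsub : thrF S i true θ₂ ⊆ thrF S i true θ₁ := by
      intro x hx
      simp only [thrF, Finset.mem_filter, decide_eq_true_eq] at hx ⊢
      exact ⟨hx.1, lt_of_le_of_lt hle hx.2⟩
    exact (Finset.eq_of_subset_of_card_le hsub h.le).symm
  | false =>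
    have hsub : thrF S i false θ₁ ⊆ thrF S i false θ₂ := by
      intro x hx
      simp only [thrF, Finset.mem_filter, decide_eq_false_iff_not, not_lt] at hx ⊢
      exact ⟨hx.1, le_trans hx.2 hle⟩
    exact Finset.eq_of_subset_of_card_le hsub h.ge

/-- A representative threshold set of a given cardinality. -/
def repF {ℓ : ℕ} (S : Finset (Fin ℓ → ℝ)) (i : Fin ℓ) (s : Bool) (k : ℕ) :
    Finset (Fin ℓ → ℝ) :=
  if h : ∃ θ : ℝ, (thrF S i s θ).card = k then thrF S i s h.choose else ∅

lemma repF_thrF {ℓ : ℕ} (S : Finset (Fin ℓ → ℝ)) (i : Fin ℓ) (s : Bool) (θ : ℝ) :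
    repF S i s (thrF S i s θ).card = thrF S i s θ := by
  have h : ∃ θ' : ℝ, (thrF S i s θ').card = (thrF S i s θ).card := ⟨θ, rfl⟩
  rw [repF, dif_pos h]
  exact thrF_card_inj S i s h.choose_spec

/-- Index data for an "abstract" decision tree of a given shape. -/
def Idx (ℓ m : ℕ) : TreeStruct → Type
  | .leaf => Bool
  | .node l r => (Fin ℓ × Bool × Fin (m + 1)) × Idx ℓ m l × Idx ℓ m r

instance instFintypeIdx (ℓ m : ℕ) : ∀ T, Fintype (Idx ℓ m T)
  | .leaf => inferInstanceAs (Fintype Bool)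
  | .node l r =>
    have := instFintypeIdx ℓ m l
    have := instFintypeIdx ℓ m r
    inferInstanceAs (Fintype ((Fin ℓ × Bool × Fin (m + 1)) × Idx ℓ m l × Idx ℓ m r))

lemma leaves_eq_internals_add_one : ∀ T : TreeStruct, T.leaves = T.internals + 1
  | .leaf => rfl
  | .node l r => by
    simp only [TreeStruct.leaves, TreeStruct.internals,
      leaves_eq_internals_add_one l, leaves_eq_internals_add_one r]
    ring

lemma card_Idx (ℓ m : ℕ) :
    ∀ T, Fintype.card (Idx ℓ m T) = 2 ^ T.leaves * (2 * ℓ * (m + 1)) ^ T.internals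
  | .leaf => by
    have : Fintype.card (Idx ℓ m .leaf) = Fintype.card Bool := rfl
    rw [this]
    simp [TreeStruct.leaves, TreeStruct.internals]
  | .node l r => by
    have hl := card_Idx ℓ m l
    have hr := card_Idx ℓ m r
    have : Fintype.card (Idx ℓ m (.node l r)) =
        Fintype.card ((Fin ℓ × Bool × Fin (m + 1)) × Idx ℓ m l × Idx ℓ m r) := rfl
    rw [this]
    simp only [Fintype.card_prod, Fintype.card_fin, Fintype.card_bool, hl, hr,
      TreeStruct.leaves, TreeStruct.internals]
    ring

/-- Evaluation of an abstract decision tree. -/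
def evalIdx {ℓ m : ℕ} (S : Finset (Fin ℓ → ℝ)) :
    (T : TreeStruct) → Idx ℓ m T → (Fin ℓ → ℝ) → Bool
  | .leaf, b, _ => b
  | .node l r, a, x =>
    if x ∈ repF S a.1.1 a.1.2.1 a.1.2.2.val then evalIdx S l a.2.1 x
    else evalIdx S r a.2.2 x

/-- The abstract tree associated with a concrete tree `t` and reference label `v`. -/
def toIdx {ℓ m : ℕ} (S : Finset (Fin ℓ → ℝ)) (hS : S.card ≤ m) (v : ℕ) :
    (t : DTree ℓ ℕ) → Idx ℓ m t.shape
  | .leaf y => (decide (y = v) : Bool)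
  | .node i θ s l r =>
    ⟨⟨i, s, ⟨(thrF S i s θ).card,
      Nat.lt_succ_of_le ((Finset.card_filter_le _ _).trans hS)⟩⟩,
      toIdx S hS v l, toIdx S hS v r⟩

lemma evalIdx_toIdx {ℓ m : ℕ} (S : Finset (Fin ℓ → ℝ)) (hS : S.card ≤ m) (v : ℕ) :
    ∀ (t : DTree ℓ ℕ) (x : Fin ℓ → ℝ), x ∈ S →
      evalIdx S t.shape (toIdx (m := m) S hS v t) x = decide (t.eval x = v)
  | .leaf y, x, hx => rfl
  | .node i θ s l r, x, hx => by
    have hrep : repF S i s (thrF S i s θ).card = thrF S i s θ := repF_thrF S i s θ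
    show (if x ∈ repF S i s (thrF S i s θ).card then _ else _) = _
    rw [hrep]
    by_cases hc : decide (θ < x i) = s
    · have hmem : x ∈ thrF S i s θ := by
        rw [thrF, Finset.mem_filter]; exact ⟨hx, hc⟩
      rw [if_pos hmem]
      show evalIdx S l.shape (toIdx (m := m) S hS v l) x = _
      rw [evalIdx_toIdx S hS v l x hx]
      show _ = decide ((if decide (θ < x i) = s then l.eval x else r.eval x) = v)
      rw [if_pos hc]
    · have hmem : x ∉ thrF S i s θ := by
        rw [thrF, Finset.mem_filter]; exact fun h => hc h.2
      rw [if_neg hmem]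
      show evalIdx S r.shape (toIdx (m := m) S hS v r) x = _
      rw [evalIdx_toIdx S hS v r x hx]
      show _ = decide ((if decide (θ < x i) = s then l.eval x else r.eval x) = v)
      rw [if_neg hc]

/-- The partition of `S` into fibers of an abstract tree evaluation. -/
def Phi {ℓ : ℕ} (m : ℕ) (S : Finset (Fin ℓ → ℝ)) (T : TreeStruct)
    (idx : Idx ℓ m T) : Finset (Finset (Fin ℓ → ℝ)) :=
  {S.filter (fun x => evalIdx S T idx x = true),
   S.filter (fun x => evalIdx S T idx x = false)}

lemma partSet_subset_range {ℓ m : ℕ} (T : TreeStruct) (S : Finset (Fin ℓ → ℝ))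
    (hS : S.card ≤ m) : PartSet ℓ T 2 S ⊆ Set.range (Phi m S T) := by
  rintro P ⟨⟨hcard2, hne, hdisj, hcov⟩, t, hshape, hreal⟩
  subst hshape
  obtain ⟨p, q, hpq, rfl⟩ := Finset.card_eq_two.mp hcard2
  obtain ⟨x₀, hx₀p⟩ := hne p (by simp)
  have hx₀S : x₀ ∈ S := (hcov x₀).mpr ⟨p, by simp, hx₀p⟩
  set v := t.eval x₀ with hv
  have hd : Disjoint p q := hdisj p (by simp) q (by simp) hpq
  have hp : p = S.filter (fun x => t.eval x = v) := by
    ext x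
    rw [Finset.mem_filter]
    constructor
    · intro hxp
      have hxS : x ∈ S := (hcov x).mpr ⟨p, by simp, hxp⟩
      exact ⟨hxS, (hreal x hxS x₀ hx₀S).mp ⟨p, by simp, hxp, hx₀p⟩⟩
    · rintro ⟨hxS, hev⟩
      obtain ⟨r, hr, hxr, hx0r⟩ := (hreal x hxS x₀ hx₀S).mpr hev
      rcases Finset.mem_insert.mp hr with rfl | hr'
      · exact hxr
      · rw [Finset.mem_singleton] at hr'
        subst hr'
        exact absurd hx0r (Finset.disjoint_left.mp hd hx₀p)
  have hq : q = S.filter (fun x => ¬ t.eval x = v) := by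
    ext x
    rw [Finset.mem_filter]
    constructor
    · intro hxq
      have hxS : x ∈ S := (hcov x).mpr ⟨q, by simp, hxq⟩
      refine ⟨hxS, fun hev => ?_⟩
      obtain ⟨r, hr, hxr, hx0r⟩ := (hreal x hxS x₀ hx₀S).mpr hev
      rcases Finset.mem_insert.mp hr with rfl | hr'
      · exact Finset.disjoint_left.mp hd hxr hxq
      · rw [Finset.mem_singleton] at hr'
        subst hr'
        exact Finset.disjoint_left.mp hd hx₀p hx0r
    · rintro ⟨hxS, hev⟩
      obtain ⟨r, hr, hxr⟩ := (hcov x).mp hxS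
      rcases Finset.mem_insert.mp hr with rfl | hr'
      · exact absurd ((hreal x hxS x₀ hx₀S).mp ⟨r, by simp, hxr, hx₀p⟩) hev
      · rw [Finset.mem_singleton] at hr'
        subst hr'
        exact hxr
  refine ⟨toIdx S hS v t, ?_⟩
  have e1 : S.filter (fun x => evalIdx S t.shape (toIdx (m := m) S hS v t) x = true) = p := by
    rw [hp]
    apply Finset.filter_congr
    intro x hx
    rw [evalIdx_toIdx S hS v t x hx]
    simp
  have e2 : S.filter (fun x => evalIdx S t.shape (toIdx (m := m) S hS v t) x = false) = q := by
    rw [hq]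
    apply Finset.filter_congr
    intro x hx
    rw [evalIdx_toIdx S hS v t x hx]
    simp
  rw [Phi, e1, e2]

lemma partSet_ncard_le {ℓ m : ℕ} (T : TreeStruct) (S : Finset (Fin ℓ → ℝ))
    (hS : S.card ≤ m) :
    (PartSet ℓ T 2 S).ncard ≤ 2 ^ T.leaves * (2 * ℓ * (m + 1)) ^ T.internals := by
  have h1 : (PartSet ℓ T 2 S).ncard ≤ (Set.range (Phi m S T)).ncard :=
    Set.ncard_le_ncard (partSet_subset_range T S hS) (Set.finite_range _)
  have h2 : (Set.range (Phi m S T)).ncard ≤ Fintype.card (Idx ℓ m T) := by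
    rw [← Set.image_univ]
    refine le_trans (Set.ncard_image_le Set.finite_univ) ?_
    rw [Set.ncard_univ, Nat.card_eq_fintype_card]
  calc (PartSet ℓ T 2 S).ncard ≤ Fintype.card (Idx ℓ m T) := h1.trans h2
    _ = _ := card_Idx ℓ m T

lemma two_points {ℓ : ℕ} {S : Finset (Fin ℓ → ℝ)} {P : Finset (Finset (Fin ℓ → ℝ))}
    (hP : IsPartition S 2 P) :
    ∃ x ∈ S, ∃ y ∈ S, x ≠ y ∧ ¬ (∃ r ∈ P, x ∈ r ∧ y ∈ r) := by
  obtain ⟨hc, hne, hdisj, hcov⟩ := hP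
  obtain ⟨p, q, hpq, rfl⟩ := Finset.card_eq_two.mp hc
  obtain ⟨x, hx⟩ := hne p (by simp)
  obtain ⟨y, hy⟩ := hne q (by simp)
  have hd := hdisj p (by simp) q (by simp) hpq
  refine ⟨x, (hcov x).mpr ⟨p, by simp, hx⟩, y, (hcov y).mpr ⟨q, by simp, hy⟩, ?_, ?_⟩
  · rintro rfl
    exact Finset.disjoint_left.mp hd hx hy
  · rintro ⟨r, hr, hxr, hyr⟩
    rcases Finset.mem_insert.mp hr with rfl | hr'
    · exact Finset.disjoint_left.mp hd hyr hy
    · rw [Finset.mem_singleton] at hr'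
      subst hr'
      exact Finset.disjoint_left.mp hd hx hxr

lemma partSet_leaf {ℓ : ℕ} (S : Finset (Fin ℓ → ℝ)) : PartSet ℓ .leaf 2 S = ∅ := by
  ext P
  simp only [Set.mem_empty_iff_false, iff_false]
  rintro ⟨hpart, t, hshape, hreal⟩
  obtain ⟨x, hxS, y, hyS, hxy, hnr⟩ := two_points hpart
  cases t with
  | leaf c =>
    exact hnr ((hreal x hxS y hyS).mpr rfl)
  | node i θ s l r => simp [DTree.shape] at hshape

lemma partSet_card_one {ℓ : ℕ} (T : TreeStruct) (S : Finset (Fin ℓ → ℝ))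
    (hS : S.card = 1) : PartSet ℓ T 2 S = ∅ := by
  ext P
  simp only [Set.mem_empty_iff_false, iff_false]
  rintro ⟨hpart, -⟩
  obtain ⟨x, hxS, y, hyS, hxy, -⟩ := two_points hpart
  obtain ⟨z, rfl⟩ := Finset.card_eq_one.mp hS
  rw [Finset.mem_singleton] at hxS hyS
  exact hxy (hxS.trans hyS.symm)

end Aux
theorem tree_two_partitioning_le_pow (ℓ : ℕ) (hℓ : 1 ≤ ℓ) (T : TreeStruct)
    (m : ℕ) (hm : 1 ≤ m) :
    treePi ℓ T 2 m ≤ (14 * m * ℓ) ^ T.internals := by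
  refine csSup_le' ?_
  rintro n ⟨S, hScard, rfl⟩
  cases T with
  | leaf =>
    rw [partSet_leaf]
    simp
  | node l r =>
    rcases Nat.lt_or_ge m 2 with hm2 | hm2
    · have hm1 : m = 1 := by omega
      rw [partSet_card_one _ S (by rw [hScard, hm1])]
      simp
    · refine (partSet_ncard_le (m := m) (.node l r) S hScard.le).trans ?_
      set N := (TreeStruct.node l r).internals with hN
      have hN1 : 1 ≤ N := by
        rw [hN]
        simp [TreeStruct.internals]
      rw [leaves_eq_internals_add_one, ← hN]
      calc 2 ^ (N + 1) * (2 * ℓ * (m + 1)) ^ N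
          = 2 * (2 * (2 * ℓ * (m + 1))) ^ N := by
            conv_rhs => rw [mul_pow]
            rw [pow_succ]
            ring
        _ ≤ 2 * (6 * m * ℓ) ^ N := by
            refine Nat.mul_le_mul_left _ (Nat.pow_le_pow_left ?_ N)
            nlinarith
        _ ≤ 2 ^ N * (6 * m * ℓ) ^ N := by
            refine Nat.mul_le_mul_right _ ?_
            calc 2 = 2 ^ 1 := (pow_one 2).symm
              _ ≤ 2 ^ N := Nat.pow_le_pow_right (by norm_num) hN1
        _ = (2 * (6 * m * ℓ)) ^ N := (mul_pow 2 (6 * m * ℓ) N).symm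
        _ ≤ (14 * m * ℓ) ^ N := Nat.pow_le_pow_left (by nlinarith) N
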